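/- (Abstract form of Theorem 2: offline PVar bounds the online DPO gradient.) Let π₁ and π₂ be probability measures on a measurable space Y, let r₁, r₂, r* : Y → ℝ be bounded measurable functions, and let g : Y → E be a measurable function into a real Banach space E with ‖g(y)‖ ≤ G for all y. Define p_k(y, y') = σ(r_k(y) − r_k(y')) for k = 1, 2, where σ is the sigmoid function, let V₂ = Var_{π₂⊗π₂}(p₂), and let Ξ = 2·sup_y |r₁(y) − r*(y)| + 2·sup_y |r₂(y) − r*(y)| + 6·TV(π₁ ⊗ π₁, π₂ ⊗ π₂). Then ‖∫ (1 − p₁(y, y'))·(g(y) − g(y')) d(π₁ ⊗ π₁)(y, y')‖ ≤ 3·G·(V₂ + Ξ)^{1/3}. -/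

import Mathlib

/-!
Swapping `y ↔ y'` leaves `π₁ ⊗ π₁` invariant and turns the weight `1 - p₁` into `-p₁`, so the
gradient is half the integral of `(1 - 2 p₁) (g y - g y')`, of norm at most `G ∫ |1 - 2 p₁|`.
Since `σ` is `1/4`-Lipschitz, replacing `r₁` by `r₂` in this integral costs at most
`sup |r₁ - r*| + sup |r₂ - r*|`, and replacing `π₁ ⊗ π₁` by `π₂ ⊗ π₂` costs the total variation
distance. Under `π₂ ⊗ π₂` the mean of `p₂` is `1/2`, so `∫ |1 - 2 p₂| = 2 ∫ |p₂ - E p₂| ≤ 2 √V₂`.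
Together with the trivial bound `∫ |1 - 2 p₁| ≤ 1`, the elementary inequality
`min 1 (2 √V + c) ≤ 3 (V + c)^(1/3)` finishes the proof.
-/

open MeasureTheory

/-- The sigmoid function `σ(z) = 1 / (1 + exp (-z))`. -/
noncomputable def sigmoid (z : ℝ) : ℝ := 1 / (1 + Real.exp (-z))

/-- Variance of a real-valued function: `∫ U² dμ - (∫ U dμ)²`. -/
noncomputable def Var {Ω : Type*} [MeasurableSpace Ω] (μ : Measure Ω) (U : Ω → ℝ) : ℝ :=
  (∫ ω, (U ω) ^ 2 ∂μ) - (∫ ω, U ω ∂μ) ^ 2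

/-- Total variation distance: supremum over measurable sets of `|μ A - ν A|`. -/
noncomputable def tvDist {Ω : Type*} [MeasurableSpace Ω] (μ ν : Measure Ω) : ℝ :=
  ⨆ A : {A : Set Ω // MeasurableSet A}, |(μ A.1).toReal - (ν A.1).toReal|

open ProbabilityTheory Set

lemma sigmoid_eq_real_sigmoid : sigmoid = Real.sigmoid := by
  funext z
  rw [sigmoid, Real.sigmoid_def, one_div]

lemma Real.lipschitzWith_sigmoid : LipschitzWith 4⁻¹ Real.sigmoid := by
  refine lipschitzWith_of_nnnorm_deriv_le differentiable_sigmoid fun x => ?_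
  rw [← NNReal.coe_le_coe, coe_nnnorm, Real.deriv_sigmoid, Real.norm_eq_abs,
    abs_of_nonneg (mul_nonneg (Real.sigmoid_nonneg x) (sub_nonneg.2 (Real.sigmoid_le_one x)))]
  push_cast
  nlinarith [sq_nonneg (2 * Real.sigmoid x - 1)]

section PrefProb

variable {α : Type*}

noncomputable def prefProb (r : α → ℝ) (z : α × α) : ℝ := sigmoid (r z.1 - r z.2)

lemma prefProb_swap (r : α → ℝ) (z : α × α) : prefProb r z.swap = 1 - prefProb r z := by
  rw [prefProb, prefProb, sigmoid_eq_real_sigmoid, ← Real.sigmoid_neg, neg_sub]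
  rfl

lemma prefProb_nonneg (r : α → ℝ) (z : α × α) : 0 ≤ prefProb r z := by
  rw [prefProb, sigmoid_eq_real_sigmoid]
  exact Real.sigmoid_nonneg _

lemma prefProb_le_one (r : α → ℝ) (z : α × α) : prefProb r z ≤ 1 := by
  rw [prefProb, sigmoid_eq_real_sigmoid]
  exact Real.sigmoid_le_one _

lemma abs_one_sub_two_mul_prefProb_le_one (r : α → ℝ) (z : α × α) :
    |1 - 2 * prefProb r z| ≤ 1 := by
  rw [abs_le]
  constructor <;> linarith [prefProb_nonneg r z, prefProb_le_one r z]

lemma abs_prefProb_sub_prefProb_le {r₁ r₂ : α → ℝ} {δ : ℝ} (h : ∀ y, |r₁ y - r₂ y| ≤ δ)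
    (z : α × α) : |prefProb r₁ z - prefProb r₂ z| ≤ δ / 2 := by
  have hlip := Real.lipschitzWith_sigmoid.dist_le_mul (r₁ z.1 - r₁ z.2) (r₂ z.1 - r₂ z.2)
  have hδ : |(r₁ z.1 - r₁ z.2) - (r₂ z.1 - r₂ z.2)| ≤ 2 * δ := by
    calc |(r₁ z.1 - r₁ z.2) - (r₂ z.1 - r₂ z.2)|
        = |(r₁ z.1 - r₂ z.1) - (r₁ z.2 - r₂ z.2)| := by ring_nf
      _ ≤ |r₁ z.1 - r₂ z.1| + |r₁ z.2 - r₂ z.2| := abs_sub _ _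
      _ ≤ 2 * δ := by linarith [h z.1, h z.2]
  rw [Real.dist_eq, Real.dist_eq] at hlip
  rw [prefProb, prefProb, sigmoid_eq_real_sigmoid]
  push_cast at hlip
  linarith

variable [MeasurableSpace α]

@[fun_prop]
lemma measurable_prefProb {r : α → ℝ} (hr : Measurable r) : Measurable (prefProb r) := by
  rw [show prefProb r = fun z : α × α => sigmoid (r z.1 - r z.2) from rfl, sigmoid_eq_real_sigmoid]
  fun_prop

lemma memLp_prefProb (μ : Measure (α × α)) [IsFiniteMeasure μ] {r : α → ℝ} (hr : Measurable r) :
    MemLp (prefProb r) 2 μ :=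
  .of_bound (measurable_prefProb hr).aestronglyMeasurable 1 (.of_forall fun z => by
    rw [Real.norm_of_nonneg (prefProb_nonneg r z)]
    exact prefProb_le_one r z)

lemma integral_prefProb_prod_self (π : Measure α) [IsProbabilityMeasure π] {r : α → ℝ}
    (hr : Measurable r) : ∫ z, prefProb r z ∂π.prod π = 2⁻¹ := by
  have h := integral_prod_swap (μ := π) (ν := π) (prefProb r)
  simp only [prefProb_swap] at h
  rw [integral_sub (integrable_const 1) ((memLp_prefProb _ hr).integrable one_le_two),
    integral_const, probReal_univ, one_smul] at h
  linarith

lemma integrable_abs_one_sub_two_mul_prefProb (μ : Measure (α × α)) [IsFiniteMeasure μ]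
    {r : α → ℝ} (hr : Measurable r) : Integrable (fun z => |1 - 2 * prefProb r z|) μ := by
  refine .of_bound (by fun_prop) 1 (.of_forall fun z => ?_)
  rw [Real.norm_eq_abs, abs_abs]
  exact abs_one_sub_two_mul_prefProb_le_one r z

end PrefProb

section Symmetrization

variable {α E : Type*} [MeasurableSpace α] [NormedAddCommGroup E] [NormedSpace ℝ E]

lemma norm_integral_prod_self_le (μ : Measure α) [SFinite μ] {F : α × α → E}
    (hF : Integrable F (μ.prod μ)) :
    ‖∫ z, F z ∂μ.prod μ‖ ≤ 2⁻¹ * ∫ z, ‖F z + F z.swap‖ ∂μ.prod μ := by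
  have hsum : ∫ z, (F z + F z.swap) ∂μ.prod μ = (2 : ℝ) • ∫ z, F z ∂μ.prod μ := by
    rw [integral_add hF (hF.swap : Integrable (fun z => F z.swap) _), integral_prod_swap, two_smul]
  have h := norm_integral_le_integral_norm (μ := μ.prod μ) fun z => F z + F z.swap
  rw [hsum, norm_smul, Real.norm_two] at h
  linarith

lemma norm_integral_one_sub_prefProb_smul_sub_le (μ : Measure α) [IsFiniteMeasure μ] {r : α → ℝ}
    (hr : Measurable r) {g : α → E} (hg : StronglyMeasurable g) {G : ℝ}
    (hgG : ∀ y, ‖g y‖ ≤ G) :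
    ‖∫ z, (1 - prefProb r z) • (g z.1 - g z.2) ∂μ.prod μ‖ ≤
      G * ∫ z, |1 - 2 * prefProb r z| ∂μ.prod μ := by
  have hΔ : ∀ z : α × α, ‖g z.1 - g z.2‖ ≤ 2 * G := fun z =>
    (norm_sub_le _ _).trans (by linarith [hgG z.1, hgG z.2])
  have hint : Integrable (fun z => (1 - prefProb r z) • (g z.1 - g z.2)) (μ.prod μ) := by
    refine .of_bound (by fun_prop) (2 * G) (.of_forall fun z => ?_)
    rw [norm_smul, Real.norm_of_nonneg (sub_nonneg.2 (prefProb_le_one r z))]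
    nlinarith [prefProb_nonneg r z, norm_nonneg (g z.1 - g z.2), hΔ z]
  have hsym : ∀ z : α × α, (1 - prefProb r z) • (g z.1 - g z.2) +
      (1 - prefProb r z.swap) • (g z.swap.1 - g z.swap.2) =
        (1 - 2 * prefProb r z) • (g z.1 - g z.2) := fun z => by
    rw [prefProb_swap, Prod.fst_swap, Prod.snd_swap, ← neg_sub (g z.1), smul_neg, sub_sub_cancel,
      ← sub_eq_add_neg, ← sub_smul]
    ring_nf
  calc _ ≤ 2⁻¹ * ∫ z, ‖(1 - 2 * prefProb r z) • (g z.1 - g z.2)‖ ∂μ.prod μ := by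
        simpa only [hsym] using norm_integral_prod_self_le μ hint
    _ ≤ 2⁻¹ * ∫ z, |1 - 2 * prefProb r z| * (2 * G) ∂μ.prod μ := by
        refine mul_le_mul_of_nonneg_left (integral_mono_of_nonneg (.of_forall fun z => ?_)
          ((integrable_abs_one_sub_two_mul_prefProb _ hr).mul_const _) (.of_forall fun z => ?_))
          (by norm_num)
        · exact norm_nonneg _
        · simp only [norm_smul, Real.norm_eq_abs]
          exact mul_le_mul_of_nonneg_left (hΔ z) (abs_nonneg _)
    _ = G * ∫ z, |1 - 2 * prefProb r z| ∂μ.prod μ := by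
        rw [integral_mul_const]
        ring

end Symmetrization

section TotalVariation

variable {α : Type*} [MeasurableSpace α]

lemma tvDist_nonneg (μ ν : Measure α) : 0 ≤ tvDist μ ν :=
  Real.iSup_nonneg fun _ => abs_nonneg _

variable {μ ν : Measure α}

lemma measureReal_sub_measureReal_le_tvDist [IsFiniteMeasure μ] [IsFiniteMeasure ν] {A : Set α}
    (hA : MeasurableSet A) : μ.real A - ν.real A ≤ tvDist μ ν := by
  have hbdd : BddAbove (range fun A : {A : Set α // MeasurableSet A} =>
      |(μ A.1).toReal - (ν A.1).toReal|) := by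
    refine ⟨μ.real univ + ν.real univ, ?_⟩
    rintro _ ⟨B, rfl⟩
    simp only [← measureReal_def]
    have hμB : μ.real B.1 ≤ μ.real univ := measureReal_mono (subset_univ _)
    have hνB : ν.real B.1 ≤ ν.real univ := measureReal_mono (subset_univ _)
    rw [abs_le]
    constructor <;> linarith [measureReal_nonneg (μ := μ) (s := B.1),
      measureReal_nonneg (μ := ν) (s := B.1)]
  exact (le_abs_self _).trans (le_ciSup hbdd ⟨A, hA⟩)

/-- By the layer-cake formula both integrals are averages over `t ∈ (0, 1]` of the measures of
the level sets `{t ≤ f}`, and these differ by at most `tvDist μ ν`. -/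
lemma integral_le_integral_add_tvDist [IsFiniteMeasure μ] [IsFiniteMeasure ν] {f : α → ℝ}
    (hf : Measurable f) (hf₀ : 0 ≤ f) (hf₁ : f ≤ 1) :
    ∫ x, f x ∂μ ≤ ∫ x, f x ∂ν + tvDist μ ν := by
  have hlayer : ∀ (ρ : Measure α) [IsFiniteMeasure ρ],
      ∫ x, f x ∂ρ = ∫ t in Ioc 0 1, ρ.real {x | t ≤ f x} := fun ρ _ =>
    (Integrable.of_bound hf.aestronglyMeasurable 1 (.of_forall fun x => by
      rw [Real.norm_of_nonneg (hf₀ x)]; exact hf₁ x)).integral_eq_integral_Ioc_meas_le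
      (.of_forall hf₀) (.of_forall hf₁)
  have hν : IntegrableOn (fun t => ν.real {x | t ≤ f x}) (Ioc 0 1) := by
    refine (AntitoneOn.integrableOn_isCompact isCompact_Icc fun s _ t _ hst => ?_).mono_set
      Ioc_subset_Icc_self
    exact measureReal_mono fun x (hx : t ≤ f x) => hst.trans hx
  calc ∫ x, f x ∂μ = ∫ t in Ioc 0 1, μ.real {x | t ≤ f x} := hlayer μ
    _ ≤ ∫ t in Ioc 0 1, (ν.real {x | t ≤ f x} + tvDist μ ν) :=
        integral_mono_of_nonneg (.of_forall fun _ => measureReal_nonneg)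
          (hν.add (integrableOn_const measure_Ioc_lt_top.ne))
          (.of_forall fun t => by
            linarith [measureReal_sub_measureReal_le_tvDist (μ := μ) (ν := ν)
              (measurableSet_le measurable_const hf : MeasurableSet {x | t ≤ f x})])
    _ = ∫ x, f x ∂ν + tvDist μ ν := by
        rw [integral_add hν (integrableOn_const measure_Ioc_lt_top.ne), setIntegral_const,
          ← hlayer ν]
        simp

end TotalVariation

section Variance

variable {Ω : Type*} [MeasurableSpace Ω] {μ : Measure Ω} [IsProbabilityMeasure μ] {U : Ω → ℝ}

lemma Var_eq_variance (hU : MemLp U 2 μ) : Var μ U = variance U μ := by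
  rw [variance_eq_sub hU]
  rfl

lemma Var_nonneg (hU : MemLp U 2 μ) : 0 ≤ Var μ U :=
  Var_eq_variance hU ▸ variance_nonneg U μ

lemma integral_abs_sub_integral_le_sqrt_Var (hU : MemLp U 2 μ) :
    ∫ ω, |U ω - ∫ x, U x ∂μ| ∂μ ≤ √(Var μ U) := by
  have hW : MemLp (fun ω => |U ω - ∫ x, U x ∂μ|) 2 μ := (hU.sub (memLp_const _)).abs
  have hsq : (∫ ω, |U ω - ∫ x, U x ∂μ| ∂μ) ^ 2 ≤ Var μ U := by
    have h := variance_nonneg (fun ω => |U ω - ∫ x, U x ∂μ|) μ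
    rw [variance_eq_sub hW] at h
    simp only [Pi.pow_apply, sq_abs] at h
    rw [Var_eq_variance hU, variance_eq_integral hU.aemeasurable]
    linarith
  exact (le_abs_self _).trans (Real.abs_le_sqrt hsq)

end Variance

section PrefProbBounds

variable {α : Type*} [MeasurableSpace α]

lemma integral_abs_one_sub_two_mul_prefProb_le_one (μ : Measure (α × α)) [IsProbabilityMeasure μ]
    (r : α → ℝ) : ∫ z, |1 - 2 * prefProb r z| ∂μ ≤ 1 := by
  have h := norm_integral_le_of_norm_le_const (μ := μ) (C := 1) (.of_forall fun z => by
    rw [Real.norm_eq_abs, abs_abs]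
    exact abs_one_sub_two_mul_prefProb_le_one r z)
  rw [probReal_univ, mul_one] at h
  exact (le_abs_self _).trans h

lemma integral_abs_one_sub_two_mul_prefProb_le_sqrt_Var (π : Measure α) [IsProbabilityMeasure π]
    {r : α → ℝ} (hr : Measurable r) :
    ∫ z, |1 - 2 * prefProb r z| ∂π.prod π ≤ 2 * √(Var (π.prod π) (prefProb r)) := by
  have hcentre : ∀ z, |1 - 2 * prefProb r z| =
      2 * |prefProb r z - ∫ z', prefProb r z' ∂π.prod π| := fun z => by
    rw [integral_prefProb_prod_self π hr, ← abs_two, ← abs_mul, ← abs_neg]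
    ring_nf
  simp only [hcentre, integral_const_mul]
  exact mul_le_mul_of_nonneg_left
    (integral_abs_sub_integral_le_sqrt_Var (memLp_prefProb _ hr)) zero_le_two

lemma integral_abs_one_sub_two_mul_prefProb_le_of_abs_sub_le (μ : Measure (α × α))
    [IsProbabilityMeasure μ] {r₁ r₂ : α → ℝ} (hr₂ : Measurable r₂) {δ : ℝ}
    (h : ∀ y, |r₁ y - r₂ y| ≤ δ) :
    ∫ z, |1 - 2 * prefProb r₁ z| ∂μ ≤ ∫ z, |1 - 2 * prefProb r₂ z| ∂μ + δ := by
  have hpt (z : α × α) : |1 - 2 * prefProb r₁ z| ≤ |1 - 2 * prefProb r₂ z| + δ :=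
    calc |1 - 2 * prefProb r₁ z|
        = |(1 - 2 * prefProb r₂ z) + 2 * (prefProb r₂ z - prefProb r₁ z)| := by ring_nf
      _ ≤ |1 - 2 * prefProb r₂ z| + |2 * (prefProb r₂ z - prefProb r₁ z)| := abs_add_le _ _
      _ = |1 - 2 * prefProb r₂ z| + 2 * |prefProb r₁ z - prefProb r₂ z| := by
          rw [abs_mul, abs_two, abs_sub_comm (prefProb r₂ z)]
      _ ≤ |1 - 2 * prefProb r₂ z| + δ := by linarith [abs_prefProb_sub_prefProb_le h z]
  calc ∫ z, |1 - 2 * prefProb r₁ z| ∂μ ≤ ∫ z, (|1 - 2 * prefProb r₂ z| + δ) ∂μ :=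
        integral_mono_of_nonneg (.of_forall fun _ => abs_nonneg _)
          ((integrable_abs_one_sub_two_mul_prefProb μ hr₂).add (integrable_const δ))
          (.of_forall hpt)
    _ = ∫ z, |1 - 2 * prefProb r₂ z| ∂μ + δ := by
        rw [integral_add (integrable_abs_one_sub_two_mul_prefProb μ hr₂) (integrable_const δ)]
        simp

end PrefProbBounds

lemma le_three_mul_rpow_one_third {Q V c x : ℝ} (hV : 0 ≤ V) (hc : 0 ≤ c) (hx : V + c ≤ x)
    (hQ₁ : Q ≤ 1) (hQ : Q ≤ 2 * √V + c) : Q ≤ 3 * x ^ ((1 : ℝ) / 3) := by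
  rcases le_or_gt 1 x with hx₁ | hx₁
  · linarith [Real.one_le_rpow hx₁ (by norm_num : (0 : ℝ) ≤ 1 / 3)]
  · have hsqrt : √V ≤ x ^ ((1 : ℝ) / 3) := by
      rw [Real.sqrt_eq_rpow]
      calc V ^ ((1 : ℝ) / 2) ≤ V ^ ((1 : ℝ) / 3) :=
            Real.rpow_le_rpow_of_exponent_ge' hV (by linarith) (by norm_num) (by norm_num)
        _ ≤ x ^ ((1 : ℝ) / 3) := Real.rpow_le_rpow hV (by linarith) (by norm_num)
    have hcx : c ≤ x ^ ((1 : ℝ) / 3) := (show c ≤ x by linarith).trans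
      (Real.self_le_rpow_of_le_one (by linarith) hx₁.le (by norm_num))
    linarith

lemma abs_sub_le_iSup_abs_sub {ι : Type*} {f g : ι → ℝ} (hf : ∃ B, ∀ i, |f i| ≤ B)
    (hg : ∃ B, ∀ i, |g i| ≤ B) (i : ι) : |f i - g i| ≤ ⨆ j, |f j - g j| := by
  obtain ⟨Bf, hBf⟩ := hf
  obtain ⟨Bg, hBg⟩ := hg
  refine le_ciSup (f := fun j => |f j - g j|) ⟨Bf + Bg, ?_⟩ i
  rintro _ ⟨j, rfl⟩
  exact (abs_sub _ _).trans (add_le_add (hBf j) (hBg j))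

theorem offline_pvar_bounds_online_dpo_gradient_general {Y : Type*} [MeasurableSpace Y]
    {E : Type*} [NormedAddCommGroup E] [NormedSpace ℝ E]
    (π₁ π₂ : Measure Y) [IsProbabilityMeasure π₁] [IsProbabilityMeasure π₂]
    (r₁ r₂ rstar : Y → ℝ)
    (hr₁ : Measurable r₁) (hr₂ : Measurable r₂)
    (hb₁ : ∃ B, ∀ y, |r₁ y| ≤ B) (hb₂ : ∃ B, ∀ y, |r₂ y| ≤ B)
    (hbstar : ∃ B, ∀ y, |rstar y| ≤ B)
    (g : Y → E) (hgm : StronglyMeasurable g) (G : ℝ) (hG : 0 ≤ G)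
    (hgb : ∀ y, ‖g y‖ ≤ G) :
    ‖∫ yy : Y × Y, (1 - sigmoid (r₁ yy.1 - r₁ yy.2)) • (g yy.1 - g yy.2) ∂(π₁.prod π₁)‖ ≤
      3 * G *
        (Var (π₂.prod π₂) (fun yy => sigmoid (r₂ yy.1 - r₂ yy.2)) +
          (2 * (⨆ y, |r₁ y - rstar y|) + 2 * (⨆ y, |r₂ y - rstar y|) +
            6 * tvDist (π₁.prod π₁) (π₂.prod π₂))) ^ ((1 : ℝ) / 3) := by
  set s₁ := ⨆ y, |r₁ y - rstar y|
  set s₂ := ⨆ y, |r₂ y - rstar y|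
  set T := tvDist (π₁.prod π₁) (π₂.prod π₂)
  set V := Var (π₂.prod π₂) (prefProb r₂)
  set Q := ∫ z, |1 - 2 * prefProb r₁ z| ∂π₁.prod π₁
  have hs₁₂ (y : Y) : |r₁ y - r₂ y| ≤ s₁ + s₂ :=
    (abs_sub_le _ (rstar y) _).trans (add_le_add (abs_sub_le_iSup_abs_sub hb₁ hbstar y)
      (abs_sub_comm (r₂ y) _ ▸ abs_sub_le_iSup_abs_sub hb₂ hbstar y))
  have hQ : Q ≤ 2 * √V + (s₁ + s₂ + T) := by
    have hchange := integral_le_integral_add_tvDist (μ := π₁.prod π₁) (ν := π₂.prod π₂)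
      (by fun_prop : Measurable fun z => |1 - 2 * prefProb r₂ z|) (fun z => abs_nonneg _)
      (abs_one_sub_two_mul_prefProb_le_one r₂)
    linarith [integral_abs_one_sub_two_mul_prefProb_le_of_abs_sub_le (π₁.prod π₁) hr₂ hs₁₂,
      integral_abs_one_sub_two_mul_prefProb_le_sqrt_Var π₂ hr₂]
  have hs₁ : 0 ≤ s₁ := Real.iSup_nonneg fun _ => abs_nonneg _
  have hs₂ : 0 ≤ s₂ := Real.iSup_nonneg fun _ => abs_nonneg _
  have hT : 0 ≤ T := tvDist_nonneg _ _
  calc _ ≤ G * Q := norm_integral_one_sub_prefProb_smul_sub_le π₁ hr₁ hgm hgb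
    _ ≤ G * (3 * (V + (2 * s₁ + 2 * s₂ + 6 * T)) ^ ((1 : ℝ) / 3)) :=
        mul_le_mul_of_nonneg_left (le_three_mul_rpow_one_third (Var_nonneg (memLp_prefProb _ hr₂))
          (by positivity) (by linarith) (integral_abs_one_sub_two_mul_prefProb_le_one _ r₁) hQ) hG
    _ = 3 * G * (V + (2 * s₁ + 2 * s₂ + 6 * T)) ^ ((1 : ℝ) / 3) := by ring

/-- Abstract form of Theorem 2: offline PVar bounds the online DPO gradient. -/
theorem offline_pvar_bounds_online_dpo_gradient {Y : Type*} [MeasurableSpace Y]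
    {E : Type*} [NormedAddCommGroup E] [NormedSpace ℝ E] [CompleteSpace E]
    (π₁ π₂ : Measure Y) [IsProbabilityMeasure π₁] [IsProbabilityMeasure π₂]
    (r₁ r₂ rstar : Y → ℝ)
    (hr₁ : Measurable r₁) (hr₂ : Measurable r₂) (hrstar : Measurable rstar)
    (hb₁ : ∃ B, ∀ y, |r₁ y| ≤ B) (hb₂ : ∃ B, ∀ y, |r₂ y| ≤ B)
    (hbstar : ∃ B, ∀ y, |rstar y| ≤ B)
    (g : Y → E) (hgm : StronglyMeasurable g) (G : ℝ) (hG : 0 ≤ G)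
    (hgb : ∀ y, ‖g y‖ ≤ G) :
    ‖∫ yy : Y × Y, (1 - sigmoid (r₁ yy.1 - r₁ yy.2)) • (g yy.1 - g yy.2) ∂(π₁.prod π₁)‖ ≤
      3 * G *
        (Var (π₂.prod π₂) (fun yy => sigmoid (r₂ yy.1 - r₂ yy.2)) +
          (2 * (⨆ y, |r₁ y - rstar y|) + 2 * (⨆ y, |r₂ y - rstar y|) +
            6 * tvDist (π₁.prod π₁) (π₂.prod π₂))) ^ ((1 : ℝ) / 3) :=
  offline_pvar_bounds_online_dpo_gradient_general π₁ π₂ r₁ r₂ rstar hr₁ hr₂ hb₁ hb₂ hbstar g hgm G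
    hG hgb
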